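/- No weakly 2-random set is cototal. -/

import Mathlib

open MeasureTheory

/-- A set (of any primcodable type) is computably enumerable. -/
def CE {α : Type*} [Primcodable α] (S : Set α) : Prop :=
  ∃ f : α →. ℕ, Partrec f ∧ S = f.Dom

/-- The `y`-th finite set in a canonical listing of all finite subsets of `ℕ`. -/
def Dfin (y : ℕ) : Set ℕ := ↑(Denumerable.ofNat (Finset ℕ) y)

/-- Application of the enumeration operator with c.e. index set `W` to an oracle `X`. -/
def enumOp (W : Set ℕ) (X : Set ℕ) : Set ℕ :=
  {x | ∃ y, Nat.pair x y ∈ W ∧ Dfin y ⊆ X}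

/-- Enumeration reducibility. -/
def EnumRed (A B : Set ℕ) : Prop := ∃ W : Set ℕ, CE W ∧ A = enumOp W B

/-- Enumeration equivalence. -/
def EnumEquiv (A B : Set ℕ) : Prop := EnumRed A B ∧ EnumRed B A

/-- Application of a hyper-enumeration operator with c.e. index set `W` to an oracle `X`. -/
def henumOp (W : Set ℕ) (X : Set ℕ) : Set ℕ :=
  {x | ∀ f : List ℕ, ∃ n y,
    Nat.pair (Encodable.encode (f.take n)) (Nat.pair x y) ∈ W ∧ Dfin y ⊆ X}

/-- Hyper-enumeration reducibility. -/
def HypEnumRed (B A : Set ℕ) : Prop := ∃ W : Set ℕ, CE W ∧ B = henumOp W A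

def Cototal (A : Set ℕ) : Prop := EnumRed A Aᶜ

def HypCototal (A : Set ℕ) : Prop := HypEnumRed A Aᶜ

def UnifIntroenum (X : Set ℕ) : Prop :=
  X.Infinite ∧ ∃ W : Set ℕ, CE W ∧ ∀ Y ⊆ X, Y.Infinite → enumOp W Y = X

def Introenum (X : Set ℕ) : Prop :=
  X.Infinite ∧ ∀ Y ⊆ X, Y.Infinite → ∃ W : Set ℕ, CE W ∧ enumOp W Y = X

/-- View a point of Cantor space as a subset of `ℕ`. -/
def toSet (A : ℕ → Bool) : Set ℕ := {n | A n = true}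

/-- Remove `n` from (the set coded by) `A`. -/
def drop (A : ℕ → Bool) (n : ℕ) : ℕ → Bool := fun m => if m = n then false else A m

/-- `A` is `Ψ`-autoreducible. -/
def AutoRed (Ψ : ℕ → (ℕ → Bool) → Bool) (A : ℕ → Bool) : Prop :=
  ∀ n, A n = Ψ n (drop A n)

/-- The basic clopen cylinder of a finite binary string. -/
def cyl (σ : List Bool) : Set (ℕ → Bool) := {A | ∀ i : Fin σ.length, A i = σ.get i}

/-- `μ` is the uniform (fair-coin) measure on Cantor space: it gives each cylinder
of a string of length `k` measure `2⁻ᵏ`.  (This characterizes the measure uniquely.) -/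
def IsCoinMeasure (μ : Measure (ℕ → Bool)) : Prop :=
  ∀ σ : List Bool, μ (cyl σ) = 2⁻¹ ^ σ.length

/-- The first `k` bits of `A`. -/
def res (A : ℕ → Bool) (k : ℕ) : List Bool := List.ofFn fun i : Fin k => A i

/-- A `Π⁰₂` class in Cantor space. -/
def IsPi02 (C : Set (ℕ → Bool)) : Prop :=
  ∃ R : ℕ → List Bool → Bool, Computable (fun p : ℕ × List Bool => R p.1 p.2) ∧
    C = {A | ∀ m, ∃ k, R m (res A k) = true}

/-- A `Π⁰₃` class in Cantor space. -/
def IsPi03 (C : Set (ℕ → Bool)) : Prop :=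
  ∃ R : ℕ → ℕ → List Bool → Bool,
    Computable (fun p : ℕ × ℕ × List Bool => R p.1 p.2.1 p.2.2) ∧
    C = {A | ∀ m, ∃ k, ∀ j, R m k (res A j) = true}

/-- The `m`-th level of the open test determined by the c.e. set `W` of pairs. -/
def testSet (W : Set (ℕ × List Bool)) (m : ℕ) : Set (ℕ → Bool) :=
  ⋃ σ ∈ {σ | (m, σ) ∈ W}, cyl σ

/-- Martin-Löf randomness (with respect to a measure `μ` on Cantor space). -/
def MLRandom (μ : Measure (ℕ → Bool)) (A : ℕ → Bool) : Prop :=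
  ∀ W : Set (ℕ × List Bool), CE W →
    (∀ m, μ (testSet W m) ≤ 2⁻¹ ^ m) → ∃ m, A ∉ testSet W m

/-- 2-randomness: passing all uniformly `Σ⁰₂` tests. -/
def TwoRandom (μ : Measure (ℕ → Bool)) (A : ℕ → Bool) : Prop :=
  ∀ R : ℕ → ℕ → List Bool → Bool,
    Computable (fun p : ℕ × ℕ × List Bool => R p.1 p.2.1 p.2.2) →
    (∀ m, μ {A | ∃ k, ∀ j, R m k (res A j) = true} ≤ 2⁻¹ ^ m) →
    ∃ m, A ∉ {A | ∃ k, ∀ j, R m k (res A j) = true}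

/-- Weak 2-randomness: avoiding every null `Π⁰₂` class. -/
def Weak2Random (μ : Measure (ℕ → Bool)) (A : ℕ → Bool) : Prop :=
  ∀ C : Set (ℕ → Bool), IsPi02 C → μ C = 0 → A ∉ C

/-- Weak 3-randomness: avoiding every null `Π⁰₃` class. -/
def Weak3Random (μ : Measure (ℕ → Bool)) (A : ℕ → Bool) : Prop :=
  ∀ C : Set (ℕ → Bool), IsPi03 C → μ C = 0 → A ∉ C

/-!
For a c.e. set `W`, let `C` be the class of `A` with `A = enumOp W Aᶜ`. It is `Π⁰₂`: for each `n`,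
`n ∈ A → n ∈ enumOp W Aᶜ` is `Σ⁰₁` in `A`, and for each axiom `⟨n, Dfin y⟩` enumerated into `W`
at stage `s`, `Dfin y ⊆ Aᶜ → n ∈ A` is an open condition on `A`. It is null: as `enumOp W` is
monotone, `C` is an antichain under inclusion, so flipping a single bit maps `C` to a class
disjoint from `C`. Flipping bit `n` preserves the coin measure and fixes every set depending only on
the other bits; approximating `C` within `ε` by a set `S` depending on finitely many bits and
flipping a bit outside them gives `2 μ (C ∩ S) ≤ μ S`, whence `μ C ≤ 2 ε`.
-/

open Set
open scoped symmDiff ENNReal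

@[simp] lemma length_res (A : ℕ → Bool) (k : ℕ) : (res A k).length = k := List.length_ofFn

lemma take_res (A : ℕ → Bool) {j k : ℕ} (h : j ≤ k) : (res A k).take j = res A j := by
  apply List.ext_getElem (by simp [h])
  intro i _ _
  simp [res]

lemma getElem?_res (A : ℕ → Bool) (k j : ℕ) :
    (res A k)[j]? = if j < k then some (A j) else none := by
  split_ifs with h <;> simp [res, h]

@[simp] lemma getElem_res (A : ℕ → Bool) (k j : ℕ) (h : j < (res A k).length) :
    (res A k)[j] = A j := by
  simp [res]

lemma getElem?_res_eq_some {A : ℕ → Bool} {k j : ℕ} {b : Bool} :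
    (res A k)[j]? = some b ↔ j < k ∧ A j = b := by
  rw [getElem?_res]
  split_ifs with h <;> simp [h]

lemma mem_cyl_iff_res_eq {A : ℕ → Bool} {σ : List Bool} : A ∈ cyl σ ↔ res A σ.length = σ := by
  constructor
  · intro h
    exact List.ext_getElem (by simp) fun i _ hi => by simpa [res] using h ⟨i, hi⟩
  · intro h i
    have := congrArg (·[i.1]?) h
    simpa [getElem?_res, List.getElem?_eq_getElem i.2] using this

lemma mem_cyl_iff {A : ℕ → Bool} {σ : List Bool} :
    A ∈ cyl σ ↔ ∀ i (h : i < σ.length), A i = σ[i] :=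
  ⟨fun h i hi => h ⟨i, hi⟩, fun h i => h i i.2⟩

lemma mem_cyl_res (A : ℕ → Bool) (k : ℕ) : A ∈ cyl (res A k) := by
  rw [mem_cyl_iff_res_eq, length_res]

lemma cyl_nil : cyl [] = univ :=
  eq_univ_of_forall fun _ i => i.elim0

lemma measurableSet_cyl (σ : List Bool) : MeasurableSet (cyl σ) := by
  have : cyl σ = ⋂ i : Fin σ.length, (fun A => A i) ⁻¹' {σ.get i} := by
    ext A; simp [cyl]
  rw [this]
  exact MeasurableSet.iInter fun i => measurable_pi_apply _ (measurableSet_singleton _)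

lemma setOf_res_eq_iUnion_cyl (P : List Bool → Prop) (k : ℕ) :
    {A | P (res A k)} = ⋃ (σ : List Bool) (_ : P σ ∧ σ.length = k), cyl σ := by
  ext A
  simp only [mem_ofPred_eq, mem_iUnion, exists_prop]
  constructor
  · exact fun h => ⟨res A k, ⟨h, length_res A k⟩, mem_cyl_res A k⟩
  · rintro ⟨σ, ⟨hσ, rfl⟩, hA⟩
    rwa [mem_cyl_iff_res_eq.1 hA]

lemma measurableSet_setOf_res (P : List Bool → Prop) (k : ℕ) : MeasurableSet {A | P (res A k)} := by
  rw [setOf_res_eq_iUnion_cyl]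
  exact MeasurableSet.iUnion fun σ => MeasurableSet.iUnion fun _ => measurableSet_cyl σ

lemma isPiSystem_range_cyl : IsPiSystem (range cyl) := by
  have key : ∀ σ τ : List Bool, σ.length ≤ τ.length → (cyl σ ∩ cyl τ).Nonempty →
      cyl σ ∩ cyl τ ∈ range cyl := by
    rintro σ τ hle ⟨A, hAσ, hAτ⟩
    refine ⟨τ, (inter_eq_right.2 fun B hB => ?_).symm⟩
    rw [mem_cyl_iff_res_eq] at hAσ hAτ hB ⊢
    rw [← take_res B hle, hB, ← hAτ, take_res A hle, hAσ]
  rintro _ ⟨σ, rfl⟩ _ ⟨τ, rfl⟩ hne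
  rcases le_total σ.length τ.length with h | h
  · exact key σ τ h hne
  · rw [inter_comm] at hne ⊢
    exact key τ σ h hne

lemma generateFrom_range_cyl :
    MeasurableSpace.generateFrom (range cyl) = (inferInstance : MeasurableSpace (ℕ → Bool)) := by
  refine le_antisymm (MeasurableSpace.generateFrom_le ?_) ?_
  · rintro _ ⟨σ, rfl⟩
    exact measurableSet_cyl σ
  · refine iSup_le fun n => MeasurableSpace.comap_le_iff_le_map.2 fun s _ => ?_
    have : (fun A : ℕ → Bool => A n) ⁻¹' s = ⋃ b ∈ s, {A | A n = b} := by ext; simp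
    rw [MeasurableSpace.map_def, this]
    refine MeasurableSet.biUnion s.to_countable fun b _ => ?_
    have : {A : ℕ → Bool | A n = b} = {A | (res A (n + 1))[n]? = some b} := by
      simp
    rw [this, setOf_res_eq_iUnion_cyl (fun σ => σ[n]? = some b)]
    exact MeasurableSet.iUnion fun σ => MeasurableSet.iUnion fun _ =>
      MeasurableSpace.measurableSet_generateFrom ⟨_, rfl⟩

def flipBit (n : ℕ) (A : ℕ → Bool) : ℕ → Bool := fun i => if i = n then !A i else A i

lemma flipBit_ne (n : ℕ) (A : ℕ → Bool) : flipBit n A ≠ A := fun h => by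
  simpa [flipBit] using congrFun h n

lemma measurable_flipBit (n : ℕ) : Measurable (flipBit n) :=
  measurable_pi_lambda _ fun i => by
    unfold flipBit
    split_ifs <;> fun_prop

lemma preimage_flipBit_cyl (n : ℕ) (σ : List Bool) :
    flipBit n ⁻¹' cyl σ = cyl (σ.modify n not) := by
  ext A
  simp only [mem_preimage, mem_cyl_iff, List.length_modify, List.getElem_modify, flipBit]
  refine forall_congr' fun i => forall_congr' fun hi => ?_
  by_cases h : i = n
  · subst h
    cases A i <;> cases σ[i] <;> simp
  · simp [h, Ne.symm h]

lemma preimage_flipBit_cylinder {n : ℕ} {s : Finset ℕ} (hn : n ∉ s) (S : Set (s → Bool)) :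
    flipBit n ⁻¹' cylinder s S = cylinder s S := by
  ext A
  have : s.restrict (flipBit n A) = s.restrict A := by
    funext i
    have : (i : ℕ) ≠ n := fun h => hn (h ▸ i.2)
    simp [flipBit, this]
  simp [cylinder, this]

lemma exists_cylinder_measure_symmDiff_lt (μ : Measure (ℕ → Bool)) [IsFiniteMeasure μ]
    {C : Set (ℕ → Bool)} (hC : MeasurableSet C) {ε : ℝ≥0∞} (hε : 0 < ε) :
    ∃ (s : Finset ℕ) (T : Set (s → Bool)), MeasurableSet T ∧ μ (cylinder s T ∆ C) < ε := by
  obtain ⟨S, hS, hSC⟩ := exists_measure_symmDiff_lt_of_generateFrom_isSetRing (μ := μ)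
    isSetRing_measurableCylinders ⟨{univ}, countable_singleton _,
      singleton_subset_iff.2 (univ_mem_measurableCylinders _), by simp⟩
    generateFrom_measurableCylinders.symm hC hε
  obtain ⟨s, T, hT, rfl⟩ := (mem_measurableCylinders S).1 hS
  exact ⟨s, T, hT, hSC⟩

namespace IsCoinMeasure

variable {μ ν : Measure (ℕ → Bool)}

lemma measure_univ (hμ : IsCoinMeasure μ) : μ univ = 1 := by
  simpa [cyl_nil] using hμ []

lemma isProbabilityMeasure (hμ : IsCoinMeasure μ) : IsProbabilityMeasure μ :=
  ⟨hμ.measure_univ⟩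

lemma unique (hμ : IsCoinMeasure μ) (hν : IsCoinMeasure ν) : μ = ν :=
  have := hμ.isProbabilityMeasure
  ext_of_generate_finite _ generateFrom_range_cyl.symm isPiSystem_range_cyl
    (by rintro _ ⟨σ, rfl⟩; rw [hμ, hν]) (by rw [hμ.measure_univ, hν.measure_univ])

lemma measurePreserving_flipBit (hμ : IsCoinMeasure μ) (n : ℕ) :
    MeasurePreserving (flipBit n) μ μ := by
  refine ⟨measurable_flipBit n, IsCoinMeasure.unique (fun σ => ?_) hμ⟩
  rw [Measure.map_apply (measurable_flipBit n) (measurableSet_cyl σ), preimage_flipBit_cyl, hμ,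
    List.length_modify]

lemma two_mul_measure_inter_le (hμ : IsCoinMeasure μ) {C S : Set (ℕ → Bool)}
    (hC : MeasurableSet C) (hS : MeasurableSet S) {n : ℕ} (hCn : Disjoint C (flipBit n ⁻¹' C))
    (hSn : flipBit n ⁻¹' S = S) : 2 * μ (C ∩ S) ≤ μ S := by
  have hflip : flipBit n ⁻¹' (C ∩ S) = flipBit n ⁻¹' C ∩ S := by rw [preimage_inter, hSn]
  have hdisj : Disjoint (C ∩ S) (flipBit n ⁻¹' (C ∩ S)) := by
    rw [hflip]
    exact hCn.mono inter_subset_left inter_subset_left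
  calc 2 * μ (C ∩ S) = μ (C ∩ S) + μ (flipBit n ⁻¹' (C ∩ S)) := by
        rw [(hμ.measurePreserving_flipBit n).measure_preimage (hC.inter hS).nullMeasurableSet,
          two_mul]
    _ = μ ((C ∩ S) ∪ flipBit n ⁻¹' (C ∩ S)) :=
        (measure_union hdisj (measurable_flipBit n (hC.inter hS))).symm
    _ ≤ μ S := measure_mono (union_subset inter_subset_right (hflip ▸ inter_subset_right))

theorem measure_eq_zero_of_disjoint_flipBit (hμ : IsCoinMeasure μ)
    {C : Set (ℕ → Bool)} (hC : MeasurableSet C) (hflip : ∀ n, Disjoint C (flipBit n ⁻¹' C)) :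
    μ C = 0 := by
  have := hμ.isProbabilityMeasure
  suffices ∀ ε > 0, μ.real C < 2 * ε by
    refine (measureReal_eq_zero_iff).1 (le_antisymm ?_ measureReal_nonneg)
    exact le_of_forall_pos_lt_add fun ε hε => by linarith [this (ε / 2) (by positivity)]
  intro ε hε
  obtain ⟨s, T, hT, hSC⟩ := exists_cylinder_measure_symmDiff_lt μ hC (ENNReal.ofReal_pos.2 hε)
  obtain ⟨n, hn⟩ := Infinite.exists_notMem_finset s
  have hSm : MeasurableSet (cylinder s T) := MeasurableSet.cylinder (α := fun _ => Bool) s hT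
  have hsymm_lt : μ.real (cylinder s T ∆ C) < ε := ENNReal.toReal_lt_of_lt_ofReal hSC
  have hC_split : μ.real (C ∩ cylinder s T) + μ.real (C \ cylinder s T) = μ.real C :=
    measureReal_inter_add_sdiff hSm
  have hhalf : 2 * μ.real (C ∩ cylinder s T) ≤ μ.real (cylinder s T) := by
    have := hμ.two_mul_measure_inter_le hC hSm (hflip n) (preimage_flipBit_cylinder hn T)
    simpa [measureReal_def, ENNReal.toReal_mul] using ENNReal.toReal_mono (measure_ne_top _ _) this
  have hS_split : μ.real (cylinder s T ∩ C) + μ.real (cylinder s T \ C) = μ.real (cylinder s T) :=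
    measureReal_inter_add_sdiff hC
  have hinter : μ.real (cylinder s T ∩ C) ≤ μ.real C := measureReal_mono inter_subset_right
  have hsymm_split := measureReal_symmDiff_eq hSm hC (μ := μ)
  linarith [measureReal_nonneg (μ := μ) (s := cylinder s T \ C)]

end IsCoinMeasure

section Computability

open Nat.Partrec Denumerable Primrec

lemma isPi02_of_primrecRel {C : Set (ℕ → Bool)} {R : ℕ → List Bool → Prop} (hR : PrimrecRel R)
    (hC : ∀ A, A ∈ C ↔ ∀ m, ∃ k, R m (res A k)) : IsPi02 C := by
  classical
  exact ⟨fun m σ => decide (R m σ), hR.decide.to_comp, by ext A; simp [hC]⟩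

lemma IsPi02.inter {C D : Set (ℕ → Bool)} (hC : IsPi02 C) (hD : IsPi02 D) : IsPi02 (C ∩ D) := by
  obtain ⟨R₁, hR₁, rfl⟩ := hC
  obtain ⟨R₂, hR₂, rfl⟩ := hD
  have hidx : Primrec fun p : ℕ × List Bool => (p.1.unpair.2, p.2) :=
    (snd.comp (unpair.comp fst)).pair snd
  refine ⟨fun m σ => bif m.unpair.1 == 0 then R₁ m.unpair.2 σ else R₂ m.unpair.2 σ,
    Computable.cond (Primrec.beq.comp (fst.comp (unpair.comp fst))
      (Primrec.const 0)).to_comp (hR₁.comp hidx.to_comp) (hR₂.comp hidx.to_comp), ?_⟩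
  ext A
  simp only [mem_inter_iff, mem_ofPred_eq]
  constructor
  · rintro ⟨h₁, h₂⟩ m
    by_cases h : m.unpair.1 = 0 <;> simp [h, h₁, h₂]
  · intro h
    exact ⟨fun m => by simpa using h (Nat.pair 0 m), fun m => by simpa using h (Nat.pair 1 m)⟩

lemma IsPi02.measurableSet {C : Set (ℕ → Bool)} (hC : IsPi02 C) : MeasurableSet C := by
  obtain ⟨R, -, rfl⟩ := hC
  simp only [ofPred_forall, ofPred_exists]
  exact MeasurableSet.iInter fun m => MeasurableSet.iUnion fun k =>
    measurableSet_setOf_res (fun σ => R m σ = true) k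

lemma CE.exists_primrecRel {W : Set ℕ} (hW : CE W) :
    ∃ P : ℕ → ℕ → Prop, PrimrecRel P ∧ ∀ a, a ∈ W ↔ ∃ s, P s a := by
  obtain ⟨f, hf, rfl⟩ := hW
  obtain ⟨c, rfl⟩ := Code.exists_code.1 (Partrec.nat_iff.1 hf)
  refine ⟨fun s a => (Code.evaln s c a).isSome, ?_, fun a => ?_⟩
  · exact Primrec.eq.comp (Primrec.option_isSome.comp (Code.primrec_evaln.comp
      ((fst.pair (Primrec.const c)).pair snd))) (Primrec.const true)
  · simp only [PFun.mem_dom, Code.evaln_complete, Option.isSome_iff_exists]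
    exact exists_comm

lemma primrec_raise' : Primrec₂ raise' := by
  let step : ℕ × List ℕ → ℕ → ℕ × List ℕ := fun p m => (m + p.1 + 1, p.2 ++ [m + p.1])
  have hfoldl : ∀ l n acc, (l.foldl step (n, acc)).2 = acc ++ raise' l n := by
    intro l
    induction l with
    | nil => simp [raise']
    | cons m l ih => intro n acc; simp [step, raise', ih]
  have hsum : Primrec fun q : (ℕ × List ℕ) × ℕ => q.2 + q.1.1 :=
    Primrec.nat_add.comp snd (fst.comp fst)
  have hstep : Primrec₂ step :=
    (Primrec.succ.comp hsum).pair (Primrec.list_concat.comp (snd.comp fst) hsum)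
  exact (snd.comp (Primrec.list_foldl fst (snd.pair (Primrec.const []))
    (hstep.comp (fst.comp snd) (snd.comp snd)).to₂)).of_eq
    fun q => by simpa using hfoldl q.1 q.2 []

def dfinList (y : ℕ) : List ℕ := raise' (ofNat (List ℕ) y) 0

lemma mem_dfinList {j y : ℕ} : j ∈ dfinList y ↔ j ∈ Dfin y := by
  change _ ↔ j ∈ Finset.map (eqv ℕ).symm.toEmbedding (raise'Finset (ofNat (List ℕ) y) 0)
  simp [dfinList, raise'Finset, Denumerable.eqv, ← Finset.mem_val]

lemma primrec_dfinList : Primrec dfinList :=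
  primrec_raise'.comp (Primrec.ofNat _) (Primrec.const 0)

lemma PrimrecRel.exists_lt' {β : Type*} [Primcodable β] {R : ℕ → β → Prop}
    (hR : PrimrecRel R) : PrimrecRel fun n b => ∃ x < n, R x b :=
  (hR.exists_mem_list.comp (Primrec.list_range.comp fst) snd).of_eq (by simp)

lemma primrecRel_getElem?_eq_some (b : Bool) :
    PrimrecRel fun (j : ℕ) (σ : List Bool) => σ[j]? = some b :=
  Primrec.eq.comp (Primrec.list_getElem?.comp snd fst) (Primrec.const _)

def cototalClass (W : Set ℕ) : Set (ℕ → Bool) := toSet ⁻¹' {X | X = enumOp W Xᶜ}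

lemma enumOp_mono (W : Set ℕ) : Monotone (enumOp W) :=
  fun _ _ hXY _ ⟨y, hy, hsub⟩ => ⟨y, hy, hsub.trans hXY⟩

lemma isAntichain_setOf_eq_enumOp_compl (W : Set ℕ) :
    IsAntichain (· ⊆ ·) {X : Set ℕ | X = enumOp W Xᶜ} := by
  intro X hX Y hY hne hXY
  refine hne (hXY.antisymm ?_)
  calc Y = enumOp W Yᶜ := hY
    _ ⊆ enumOp W Xᶜ := enumOp_mono W (compl_subset_compl.2 hXY)
    _ = X := hX.symm

lemma toSet_injective : Function.Injective toSet := fun _ _ h =>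
  funext fun i => Bool.eq_iff_iff.2 (Set.ext_iff.1 h i)

lemma toSet_flipBit_comparable (n : ℕ) (A : ℕ → Bool) :
    toSet A ⊆ toSet (flipBit n A) ∨ toSet (flipBit n A) ⊆ toSet A := by
  cases hn : A n
  · exact Or.inl fun i hi => by by_cases h : i = n <;> simp_all [toSet, flipBit]
  · exact Or.inr fun i hi => by by_cases h : i = n <;> simp_all [toSet, flipBit]

lemma disjoint_cototalClass_preimage_flipBit (W : Set ℕ) (n : ℕ) :
    Disjoint (cototalClass W) (flipBit n ⁻¹' cototalClass W) := by
  refine Set.disjoint_left.2 fun A hA hflip => ?_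
  have hne : toSet A ≠ toSet (flipBit n A) := fun h => flipBit_ne n A (toSet_injective h).symm
  rcases toSet_flipBit_comparable n A with h | h
  · exact isAntichain_setOf_eq_enumOp_compl W hA hflip hne h
  · exact isAntichain_setOf_eq_enumOp_compl W hflip hA hne.symm h

lemma mem_enumOp_compl_toSet {W : Set ℕ} {A : ℕ → Bool} {n : ℕ} :
    n ∈ enumOp W (toSet A)ᶜ ↔ ∃ y, Nat.pair n y ∈ W ∧ ∀ j ∈ Dfin y, A j = false := by
  simp [enumOp, toSet, subset_def]

lemma exists_res_iff_imp_eq_true {P : ℕ → ℕ → Prop} (A : ℕ → Bool) (n y s : ℕ) :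
    (∃ k, ¬ P s (Nat.pair n y) ∨ (∃ j ∈ dfinList y, (res A k)[j]? = some true) ∨
        (res A k)[n]? = some true) ↔
      (P s (Nat.pair n y) → (∀ j ∈ Dfin y, A j = false) → A n = true) := by
  constructor
  · rintro ⟨k, hk | ⟨j, hj, hjk⟩ | hnk⟩ hs hy
    · exact absurd hs hk
    · simp [getElem?_res_eq_some, hy j (mem_dfinList.1 hj)] at hjk
    · exact (getElem?_res_eq_some.1 hnk).2
  · intro h
    by_cases hs : P s (Nat.pair n y)
    · by_cases hy : ∀ j ∈ Dfin y, A j = false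
      · exact ⟨n + 1, Or.inr (Or.inr (getElem?_res_eq_some.2 ⟨by omega, h hs hy⟩))⟩
      · push Not at hy
        obtain ⟨j, hj, hAj⟩ := hy
        exact ⟨j + 1, Or.inr (Or.inl ⟨j, mem_dfinList.2 hj,
          getElem?_res_eq_some.2 ⟨by omega, by simpa using hAj⟩⟩)⟩
    · exact ⟨0, Or.inl hs⟩

lemma exists_res_iff_imp_mem_enumOp {W : Set ℕ} {P : ℕ → ℕ → Prop}
    (hP : ∀ a, a ∈ W ↔ ∃ s, P s a) (A : ℕ → Bool) (n : ℕ) :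
    (∃ k, (res A k)[n]? = some false ∨ ∃ y < (res A k).length, ∃ s < (res A k).length,
        P s (Nat.pair n y) ∧ ∀ j ∈ dfinList y, (res A k)[j]? = some false) ↔
      (A n = true → n ∈ enumOp W (toSet A)ᶜ) := by
  simp only [length_res]
  constructor
  · rintro ⟨k, hk | ⟨y, -, s, -, hs, hy⟩⟩ hn
    · simp [getElem?_res_eq_some, hn] at hk
    · exact mem_enumOp_compl_toSet.2 ⟨y, (hP _).2 ⟨s, hs⟩,
        fun j hj => (getElem?_res_eq_some.1 (hy j (mem_dfinList.2 hj))).2⟩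
  · intro h
    cases hn : A n
    · exact ⟨n + 1, Or.inl (getElem?_res_eq_some.2 ⟨by omega, hn⟩)⟩
    · obtain ⟨y, hyW, hy⟩ := mem_enumOp_compl_toSet.1 (h hn)
      obtain ⟨s, hs⟩ := (hP _).1 hyW
      refine ⟨y + s + (dfinList y).sum + 1, Or.inr ⟨y, by omega, s, by omega, hs,
        fun j hj => getElem?_res_eq_some.2 ⟨?_, hy j (mem_dfinList.1 hj)⟩⟩⟩
      have := List.le_sum_of_mem hj
      omega

lemma isPi02_setOf_subset_enumOp {W : Set ℕ} (hW : CE W) :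
    IsPi02 {A | toSet A ⊆ enumOp W (toSet A)ᶜ} := by
  obtain ⟨P, hPr, hP⟩ := hW.exists_primrecRel
  refine isPi02_of_primrecRel (R := fun n σ => σ[n]? = some false ∨ ∃ y < σ.length,
    ∃ s < σ.length, P s (Nat.pair n y) ∧ ∀ j ∈ dfinList y, σ[j]? = some false) ?_
    fun A => ?_
  · have hall : PrimrecRel fun (y : ℕ) (σ : List Bool) => ∀ j ∈ dfinList y, σ[j]? = some false :=
      (PrimrecRel.forall_mem_list (primrecRel_getElem?_eq_some false)).comp
        (primrec_dfinList.comp fst) snd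
    have hs : PrimrecRel fun (s : ℕ) (q : ℕ × ℕ × List Bool) =>
        P s (Nat.pair q.1 q.2.1) ∧ ∀ j ∈ dfinList q.2.1, q.2.2[j]? = some false :=
      (hPr.comp fst (Primrec₂.natPair.comp (fst.comp snd) (fst.comp (snd.comp snd)))).and
        (hall.comp (fst.comp (snd.comp snd)) (snd.comp (snd.comp snd)))
    have hy : PrimrecRel fun (y : ℕ) (p : ℕ × List Bool) => ∃ s < p.2.length,
        P s (Nat.pair p.1 y) ∧ ∀ j ∈ dfinList y, p.2[j]? = some false :=
      hs.exists_lt'.comp (list_length.comp (snd.comp snd))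
        (pair (fst.comp snd) (pair fst (snd.comp snd)))
    exact ((primrecRel_getElem?_eq_some false)).or
      (hy.exists_lt'.comp (list_length.comp snd) Primrec.id)
  · simp only [mem_ofPred_eq, exists_res_iff_imp_mem_enumOp hP]
    rfl

lemma isPi02_setOf_enumOp_subset {W : Set ℕ} (hW : CE W) :
    IsPi02 {A | enumOp W (toSet A)ᶜ ⊆ toSet A} := by
  obtain ⟨P, hPr, hP⟩ := hW.exists_primrecRel
  -- `m` codes `(n, y, s)`: the axiom `⟨n, Dfin y⟩`, if enumerated into `W` by stage `s`
  refine isPi02_of_primrecRel (R := fun m σ => ¬ P m.unpair.2.unpair.2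
    (Nat.pair m.unpair.1 m.unpair.2.unpair.1) ∨
    (∃ j ∈ dfinList m.unpair.2.unpair.1, σ[j]? = some true) ∨ σ[m.unpair.1]? = some true) ?_
    fun A => ?_
  · have hn : Primrec fun p : ℕ × List Bool => p.1.unpair.1 := fst.comp (unpair.comp fst)
    have hy : Primrec fun p : ℕ × List Bool => p.1.unpair.2.unpair.1 :=
      fst.comp (unpair.comp (snd.comp (unpair.comp fst)))
    have hs : Primrec fun p : ℕ × List Bool => p.1.unpair.2.unpair.2 :=
      snd.comp (unpair.comp (snd.comp (unpair.comp fst)))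
    exact (hPr.comp hs (Primrec₂.natPair.comp hn hy)).not.or
      (((PrimrecRel.exists_mem_list (primrecRel_getElem?_eq_some true)).comp
        (primrec_dfinList.comp hy) snd).or ((primrecRel_getElem?_eq_some true).comp hn snd))
  · simp only [mem_ofPred_eq, exists_res_iff_imp_eq_true]
    constructor
    · exact fun h m hs hy => h (mem_enumOp_compl_toSet.2 ⟨_, (hP _).2 ⟨_, hs⟩, hy⟩)
    · intro h n hn
      obtain ⟨y, hyW, hy⟩ := mem_enumOp_compl_toSet.1 hn
      obtain ⟨s, hs⟩ := (hP _).1 hyW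
      have := h (Nat.pair n (Nat.pair y s))
      simp only [Nat.unpair_pair] at this
      exact this hs hy

lemma isPi02_cototalClass {W : Set ℕ} (hW : CE W) : IsPi02 (cototalClass W) := by
  convert (isPi02_setOf_subset_enumOp hW).inter (isPi02_setOf_enumOp_subset hW) using 1
  ext A
  exact subset_antisymm_iff

end Computability

/-- No weakly 2-random set is cototal. -/
theorem stmt_11 (μ : Measure (ℕ → Bool)) (hμ : IsCoinMeasure μ)
    (A : ℕ → Bool) (h : Weak2Random μ A) : ¬ Cototal (toSet A) := by
  rintro ⟨W, hW, hA⟩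
  have hPi02 := isPi02_cototalClass hW
  exact h _ hPi02 (hμ.measure_eq_zero_of_disjoint_flipBit hPi02.measurableSet
    (disjoint_cototalClass_preimage_flipBit W)) hA
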